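/- Let F be a finite field with |F| = q ≥ 2. Under the uniform distribution on tuples (a,b,c,d,k13,k14,k25,k26,k47,k57,k78,k79) ∈ F^12, the probability that BOTH decoding matrices F_{t1} = [[a·k13, (a·k14·k47 + c·k25·k57)·k78], [b·k13, (b·k14·k47 + d·k25·k57)·k78]] and F_{t2} = [[c·k26, (a·k14·k47 + c·k25·k57)·k79], [d·k26, (b·k14·k47 + d·k25·k57)·k79]] are invertible equals (q+1)(q-1)^10/q^11. Equivalently, the number of such tuples in F^12 making both matrices invertible is q(q+1)(q-1)^10, so the failure probability of the butterfly network (that at least one sink cannot decode) is P_e = 1 − (q+1)(q-1)^10/q^11. -/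

import Mathlib

/- The decoding matrix at sink `t₁` of the butterfly network. -/
def Ft1 {F : Type*} [Field F] (a b c d k13 k14 k47 k78 k25 k57 : F) :
    Matrix (Fin 2) (Fin 2) F :=
  !![a * k13, (a * k14 * k47 + c * k25 * k57) * k78;
     b * k13, (b * k14 * k47 + d * k25 * k57) * k78]

/- The decoding matrix at sink `t₂` of the butterfly network. -/
def Ft2 {F : Type*} [Field F] (a b c d k14 k47 k79 k25 k57 k26 : F) :
    Matrix (Fin 2) (Fin 2) F :=
  !![c * k26, (a * k14 * k47 + c * k25 * k57) * k79;
     d * k26, (b * k14 * k47 + d * k25 * k57) * k79]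

/-!
The determinants factor through the source kernel:
`det F_{t1} = det K_s · k13 k25 k57 k78` and `det F_{t2} = -det K_s · k14 k26 k47 k79`.
So both sinks decode exactly when `K_s ∈ GL₂(F)` and the eight network coefficients are
nonzero, and the number of such tuples is
`|GL₂(F)| (q - 1)^8 = (q² - 1)(q² - q)(q - 1)^8 = q (q + 1)(q - 1)^10`.
-/

open Finset Matrix

section Counting

variable {α : Type*}

theorem card_filter_isUnit (M : Type*) [Monoid M] [Fintype M]
    [DecidablePred (IsUnit : M → Prop)] :
    #{a : M | IsUnit a} = Nat.card Mˣ := by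
  rw [← Fintype.card_subtype, ← Nat.card_eq_fintype_card]
  exact Nat.card_congr (Equiv.ofInjective _ Units.val_injective).symm

theorem card_filter_forall_ne {ι : Type*} [Fintype ι] [DecidableEq ι] [Fintype α] (a : α)
    [DecidablePred fun y : ι → α => ∀ i, y i ≠ a] :
    #{y : ι → α | ∀ i, y i ≠ a} = (Fintype.card α - 1) ^ Fintype.card ι := by
  classical
  have hpi : ({y : ι → α | ∀ i, y i ≠ a} : Finset (ι → α)) =
      Fintype.piFinset fun _ => {x | x ≠ a} := by
    ext y
    simp [Fintype.mem_piFinset]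
  rw [hpi, Fintype.card_piFinset, prod_const, card_univ, filter_ne', card_erase_of_mem (mem_univ a),
    card_univ]

theorem card_filter_not_div_card {α : Type*} [Fintype α] [Nonempty α] (p : α → Prop)
    [DecidablePred p] [∀ x, Decidable (¬p x)] :
    (#{x | ¬p x} : ℝ) / Fintype.card α = 1 - #{x | p x} / Fintype.card α := by
  rw [eq_sub_iff_add_eq, ← add_div, ← Nat.cast_add, add_comm, card_filter_add_card_filter_not,
    card_univ, div_self (by simp)]

/-- Reads `v` as `f₁ ++ f₂ ++ (k13, k14, k25, k26, k47, k57, k78, k79)` and returns the source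
kernel `K_s = [f₁ f₂]` together with the eight network coefficients. -/
def splitTuple : (Fin 12 → α) ≃ Matrix (Fin 2) (Fin 2) α × (Fin 8 → α) :=
  (Fin.appendEquiv 4 8).symm.trans <| Equiv.prodCongr
    ((Fin.appendEquiv 2 2).symm.trans <| (piFinTwoEquiv fun _ => Fin 2 → α).symm.trans <|
      (Equiv.piComm _).trans Matrix.of)
    (Equiv.refl _)

theorem splitTuple_apply (v : Fin 12 → α) :
    splitTuple v = (!![v 0, v 2; v 1, v 3], ![v 4, v 5, v 6, v 7, v 8, v 9, v 10, v 11]) := by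
  ext i j
  · fin_cases i <;> fin_cases j <;> rfl
  · fin_cases i <;> rfl

end Counting

section Butterfly

variable {F : Type*} [Field F]

theorem det_Ft1 (a b c d k13 k14 k47 k78 k25 k57 : F) :
    (Ft1 a b c d k13 k14 k47 k78 k25 k57).det = !![a, c; b, d].det * (k13 * k25 * k57 * k78) := by
  simp only [Ft1, det_fin_two_of]
  ring

theorem det_Ft2 (a b c d k14 k47 k79 k25 k57 k26 : F) :
    (Ft2 a b c d k14 k47 k79 k25 k57 k26).det =
      -(!![a, c; b, d].det * (k14 * k26 * k47 * k79)) := by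
  simp only [Ft2, det_fin_two_of]
  ring

theorem isUnit_Ft1_and_isUnit_Ft2_iff (a b c d k13 k14 k25 k26 k47 k57 k78 k79 : F) :
    IsUnit (Ft1 a b c d k13 k14 k47 k78 k25 k57) ∧ IsUnit (Ft2 a b c d k14 k47 k79 k25 k57 k26) ↔
      IsUnit !![a, c; b, d] ∧
        k13 ≠ 0 ∧ k14 ≠ 0 ∧ k25 ≠ 0 ∧ k26 ≠ 0 ∧ k47 ≠ 0 ∧ k57 ≠ 0 ∧ k78 ≠ 0 ∧ k79 ≠ 0 := by
  simp only [isUnit_iff_isUnit_det _, isUnit_iff_ne_zero, det_Ft1, det_Ft2, neg_ne_zero,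
    mul_ne_zero_iff]
  tauto

variable (F) in
/-- The coordinates of `v` are `(a, b, c, d, k13, k14, k25, k26, k47, k57, k78, k79)`. It is an
`abbrev` so that, as in the statement, `Decidable` instances are found for the conjunction. -/
abbrev BothSinksDecode (v : Fin 12 → F) : Prop :=
  IsUnit (Ft1 (v 0) (v 1) (v 2) (v 3) (v 4) (v 5) (v 8) (v 10) (v 6) (v 9)) ∧
    IsUnit (Ft2 (v 0) (v 1) (v 2) (v 3) (v 5) (v 8) (v 11) (v 6) (v 9) (v 7))

theorem bothSinksDecode_iff (v : Fin 12 → F) :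
    BothSinksDecode F v ↔ IsUnit (splitTuple v).1 ∧ ∀ j, (splitTuple v).2 j ≠ 0 := by
  simp [BothSinksDecode, isUnit_Ft1_and_isUnit_Ft2_iff, splitTuple_apply, Fin.forall_fin_succ]

variable (F) [Fintype F]

theorem card_bothSinksDecode [DecidablePred (BothSinksDecode F)] :
    #{v | BothSinksDecode F v} =
      Fintype.card F * (Fintype.card F + 1) * (Fintype.card F - 1) ^ 10 := by
  classical
  have hq : 1 ≤ Fintype.card F := Fintype.card_pos
  calc _ = #(({K : Matrix (Fin 2) (Fin 2) F | IsUnit K} : Finset _) ×ˢ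
          ({k : Fin 8 → F | ∀ j, k j ≠ 0} : Finset _)) :=
        card_equiv splitTuple fun v => by simp [bothSinksDecode_iff]
    _ = (Fintype.card F ^ 2 - 1) * (Fintype.card F ^ 2 - Fintype.card F) *
          (Fintype.card F - 1) ^ 8 := by
      rw [card_product, card_filter_isUnit, card_GL_field, card_filter_forall_ne,
        Fin.prod_univ_two, Fintype.card_fin]
      simp only [Fin.val_zero, Fin.val_one, pow_zero, pow_one]
    _ = _ := by
      zify [hq, Nat.one_le_pow _ _ hq, Nat.le_self_pow two_ne_zero (Fintype.card F)]
      ring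

end Butterfly

open Classical in
theorem butterfly_network_failure_probability
    (F : Type*) [Field F] [Fintype F] (q : ℕ) (hq : Fintype.card F = q) :
    ((Finset.univ.filter fun v : Fin 12 → F =>
        IsUnit (Ft1 (v 0) (v 1) (v 2) (v 3) (v 4) (v 5) (v 8) (v 10) (v 6) (v 9)) ∧
        IsUnit (Ft2 (v 0) (v 1) (v 2) (v 3) (v 5) (v 8) (v 11) (v 6) (v 9) (v 7))).card : ℝ) /
        (q : ℝ) ^ 12 = ((q : ℝ) + 1) * ((q : ℝ) - 1) ^ 10 / (q : ℝ) ^ 11 ∧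
    (Finset.univ.filter fun v : Fin 12 → F =>
        IsUnit (Ft1 (v 0) (v 1) (v 2) (v 3) (v 4) (v 5) (v 8) (v 10) (v 6) (v 9)) ∧
        IsUnit (Ft2 (v 0) (v 1) (v 2) (v 3) (v 5) (v 8) (v 11) (v 6) (v 9) (v 7))).card =
      q * (q + 1) * (q - 1) ^ 10 ∧
    ((Finset.univ.filter fun v : Fin 12 → F =>
        ¬ (IsUnit (Ft1 (v 0) (v 1) (v 2) (v 3) (v 4) (v 5) (v 8) (v 10) (v 6) (v 9)) ∧
           IsUnit (Ft2 (v 0) (v 1) (v 2) (v 3) (v 5) (v 8) (v 11) (v 6) (v 9) (v 7)))).card : ℝ) /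
        (q : ℝ) ^ 12 = 1 - ((q : ℝ) + 1) * ((q : ℝ) - 1) ^ 10 / (q : ℝ) ^ 11 := by
  subst hq
  have hpos : 1 ≤ Fintype.card F := Fintype.card_pos
  have hcard : (Fintype.card F : ℝ) ^ 12 = Fintype.card (Fin 12 → F) := by simp
  have hprob : (#{v | BothSinksDecode F v} : ℝ) / Fintype.card (Fin 12 → F) =
      (Fintype.card F + 1) * (Fintype.card F - 1) ^ 10 / (Fintype.card F : ℝ) ^ 11 := by
    rw [card_bothSinksDecode, ← hcard]
    push_cast [Nat.cast_sub hpos]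
    field_simp
  rw [hcard, card_filter_not_div_card]
  exact ⟨hprob, card_bothSinksDecode F, by rw [hprob]⟩
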